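/- arXiv:1505.01679 — 3 statements merged into one kernel-verified Lean document; each statement's English description precedes it below -/
import Mathlib

section
/- Let α, β ∈ (0,1) with α + β > 1, and suppose f is Hölder of exponent α and g is Hölder of exponent β on an interval I. Then for each t in the interior of I, the 'defect' in the Leibniz rule for the h-scale derivative tends to zero: □_h(f·g)/□t (t) − [□_h f/□t (t)·g(t) + f(t)·□_h g/□t (t)] → 0 as h → 0⁺. -/
/-!
Subtracting the Leibniz terms from the forward and backward difference quotients of `f * g`
leaves only the products of increments `Δf Δg / h` and `∇f ∇g / h`. By the Hölder bounds each is
at most `C_f C_g h ^ (α + β - 1)`, which tends to `0` because `α + β > 1`.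
-/

/-- The h-scale derivative of a real function, as a complex number. -/
noncomputable def scaleDerivH (f : ℝ → ℝ) (h t : ℝ) : ℂ :=
  (1 / 2 : ℂ) *
    ((((f (t + h) - f t) / h : ℝ) + ((f t - f (t - h)) / h : ℝ)) +
      Complex.I * (((f (t + h) - f t) / h : ℝ) - ((f t - f (t - h)) / h : ℝ)))

open Filter Topology

noncomputable def scaleComb (a b : ℝ) : ℂ :=
  (1 / 2 : ℂ) * (((a : ℂ) + b) + Complex.I * ((a : ℂ) - b))

lemma scaleDerivH_eq_scaleComb (f : ℝ → ℝ) (h t : ℝ) :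
    scaleDerivH f h t = scaleComb ((f (t + h) - f t) / h) ((f t - f (t - h)) / h) :=
  rfl

lemma norm_scaleComb_le (a b : ℝ) : ‖scaleComb a b‖ ≤ |a| + |b| := by
  have h_add : ‖(a : ℂ) + b‖ = |a + b| := by
    rw [← Complex.ofReal_add, Complex.norm_real, Real.norm_eq_abs]
  have h_sub : ‖Complex.I * ((a : ℂ) - b)‖ = |a - b| := by
    rw [norm_mul, Complex.norm_I, one_mul, ← Complex.ofReal_sub, Complex.norm_real,
      Real.norm_eq_abs]
  calc ‖scaleComb a b‖ ≤ (1 / 2) * (|a + b| + |a - b|) := by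
        rw [scaleComb, norm_mul, ← h_add, ← h_sub]
        gcongr
        · simp
        · exact norm_add_le _ _
    _ ≤ (1 / 2) * ((|a| + |b|) + (|a| + |b|)) := by
        gcongr
        · exact abs_add_le _ _
        · exact abs_sub _ _
    _ = |a| + |b| := by ring

lemma scaleDerivH_mul_sub (f g : ℝ → ℝ) {h : ℝ} (hh : h ≠ 0) (t : ℝ) :
    scaleDerivH (fun x => f x * g x) h t -
        (scaleDerivH f h t * (g t : ℂ) + (f t : ℂ) * scaleDerivH g h t) =
      scaleComb ((f (t + h) - f t) * (g (t + h) - g t) / h)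
        (-((f t - f (t - h)) * (g t - g (t - h))) / h) := by
  have hh' : (h : ℂ) ≠ 0 := by exact_mod_cast hh
  simp only [scaleDerivH_eq_scaleComb, scaleComb]
  push_cast
  field_simp
  ring

lemma abs_mul_div_le_rpow {u v h Cu Cv α β : ℝ} (hh : 0 < h)
    (hu : |u| ≤ Cu * h ^ α) (hv : |v| ≤ Cv * h ^ β) :
    |u * v / h| ≤ Cu * Cv * h ^ (α + β - 1) :=
  calc |u * v / h| = |u| * |v| / h := by rw [abs_div, abs_mul, abs_of_pos hh]
    _ ≤ Cu * h ^ α * (Cv * h ^ β) / h :=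
        div_le_div_of_nonneg_right
          (mul_le_mul hu hv (abs_nonneg _) ((abs_nonneg _).trans hu)) hh.le
    _ = Cu * Cv * h ^ (α + β - 1) := by
        rw [Real.rpow_sub hh, Real.rpow_one, Real.rpow_add hh]; ring

lemma tendsto_rpow_nhdsGT_zero {r : ℝ} (hr : 0 < r) :
    Tendsto (fun h : ℝ => h ^ r) (𝓝[>] 0) (𝓝 0) := by
  have h_cont := (Real.continuousAt_rpow_const 0 r (Or.inr hr.le)).tendsto
  rw [Real.zero_rpow hr.ne'] at h_cont
  exact h_cont.mono_left nhdsWithin_le_nhds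

lemma norm_scaleDerivH_mul_sub_le {f g : ℝ → ℝ} {h t Cf Cg α β : ℝ} (hh : 0 < h)
    (hf_fwd : |f (t + h) - f t| ≤ Cf * h ^ α) (hf_bwd : |f t - f (t - h)| ≤ Cf * h ^ α)
    (hg_fwd : |g (t + h) - g t| ≤ Cg * h ^ β) (hg_bwd : |g t - g (t - h)| ≤ Cg * h ^ β) :
    ‖scaleDerivH (fun x => f x * g x) h t -
        (scaleDerivH f h t * (g t : ℂ) + (f t : ℂ) * scaleDerivH g h t)‖ ≤
      2 * Cf * Cg * h ^ (α + β - 1) := by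
  rw [scaleDerivH_mul_sub f g hh.ne', neg_div]
  refine (norm_scaleComb_le _ _).trans ?_
  rw [abs_neg]
  linarith [abs_mul_div_le_rpow hh hf_fwd hg_fwd, abs_mul_div_le_rpow hh hf_bwd hg_bwd]

lemma eventually_add_mem_and_sub_mem_of_mem_interior {I : Set ℝ} {t : ℝ}
    (ht : t ∈ interior I) : ∀ᶠ h in 𝓝[>] 0, t + h ∈ I ∧ t - h ∈ I := by
  have hI : I ∈ 𝓝 t := mem_interior_iff_mem_nhds.mp ht
  have h_add : Tendsto (fun h : ℝ => t + h) (𝓝 0) (𝓝 t) :=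
    (show Continuous (fun h : ℝ => t + h) by fun_prop).tendsto' 0 t (by simp)
  have h_sub : Tendsto (fun h : ℝ => t - h) (𝓝 0) (𝓝 t) :=
    (show Continuous (fun h : ℝ => t - h) by fun_prop).tendsto' 0 t (by simp)
  exact ((h_add.eventually hI).and (h_sub.eventually hI)).filter_mono nhdsWithin_le_nhds

theorem scale_leibniz_defect_general (α β : ℝ) (hαβ : 1 < α + β)
    (I : Set ℝ) (f g : ℝ → ℝ)
    (hf : ∃ C > 0, ∀ s ∈ I, ∀ t ∈ I, |f t - f s| ≤ C * |t - s| ^ α)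
    (hg : ∃ C > 0, ∀ s ∈ I, ∀ t ∈ I, |g t - g s| ≤ C * |t - s| ^ β)
    (t : ℝ) (ht : t ∈ interior I) :
    Filter.Tendsto
      (fun h : ℝ =>
        scaleDerivH (fun x => f x * g x) h t -
          (scaleDerivH f h t * (g t : ℂ) + (f t : ℂ) * scaleDerivH g h t))
      (nhdsWithin 0 (Set.Ioi 0)) (nhds 0) := by
  obtain ⟨Cf, -, Hf⟩ := hf
  obtain ⟨Cg, -, Hg⟩ := hg
  have htI : t ∈ I := interior_subset ht
  have h_bound : Tendsto (fun h : ℝ => 2 * Cf * Cg * h ^ (α + β - 1)) (𝓝[>] 0) (𝓝 0) := by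
    simpa using (tendsto_rpow_nhdsGT_zero (by linarith : 0 < α + β - 1)).const_mul (2 * Cf * Cg)
  refine squeeze_zero_norm' ?_ h_bound
  filter_upwards [self_mem_nhdsWithin, eventually_add_mem_and_sub_mem_of_mem_interior ht]
    with h (hh : 0 < h) ⟨h_fwd, h_bwd⟩
  have h_fwd_dist : |t + h - t| = h := by rw [add_sub_cancel_left, abs_of_pos hh]
  have h_bwd_dist : |t - (t - h)| = h := by rw [sub_sub_cancel, abs_of_pos hh]
  exact norm_scaleDerivH_mul_sub_le hh
    ((Hf t htI (t + h) h_fwd).trans_eq (by rw [h_fwd_dist]))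
    ((Hf (t - h) h_bwd t htI).trans_eq (by rw [h_bwd_dist]))
    ((Hg t htI (t + h) h_fwd).trans_eq (by rw [h_fwd_dist]))
    ((Hg (t - h) h_bwd t htI).trans_eq (by rw [h_bwd_dist]))

theorem scale_leibniz_defect (α β : ℝ) (hα : α ∈ Set.Ioo (0:ℝ) 1)
    (hβ : β ∈ Set.Ioo (0:ℝ) 1) (hαβ : 1 < α + β)
    (I : Set ℝ) (f g : ℝ → ℝ)
    (hf : ∃ C > 0, ∀ s ∈ I, ∀ t ∈ I, |f t - f s| ≤ C * |t - s| ^ α)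
    (hg : ∃ C > 0, ∀ s ∈ I, ∀ t ∈ I, |g t - g s| ≤ C * |t - s| ^ β)
    (t : ℝ) (ht : t ∈ interior I) :
    Filter.Tendsto
      (fun h : ℝ =>
        scaleDerivH (fun x => f x * g x) h t -
          (scaleDerivH f h t * (g t : ℂ) + (f t : ℂ) * scaleDerivH g h t))
      (nhdsWithin 0 (Set.Ioi 0)) (nhds 0) :=
  scale_leibniz_defect_general α β hαβ I f g hf hg t ht
end

section
/- If f : [a,b] → ℝ is continuously differentiable, then ∫_a^b (□_h f/□t)(t) dt → f(b) − f(a) as h → 0⁺ (where f is extended continuously differentiably to a slightly larger interval). -/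
open Filter Set MeasureTheory intervalIntegral Topology Complex

section Averages

variable {f : ℝ → ℝ} {s : Set ℝ} {x : ℝ}

theorem tendsto_integral_add_div_nhdsGT_zero (hf : ContinuousOn f s) (hs : IsOpen s)
    (hx : x ∈ s) :
    Tendsto (fun h => (∫ t in x..x + h, f t) / h) (𝓝[>] 0) (𝓝 (f x)) :=
  (integral_hasDerivAt_right .refl (hf.stronglyMeasurableAtFilter hs x hx)
    (hf.continuousAt (hs.mem_nhds hx))).tendsto_slope_zero_right.congr fun h => by
    simp [div_eq_inv_mul]

theorem tendsto_integral_sub_div_nhdsGT_zero (hf : ContinuousOn f s) (hs : IsOpen s)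
    (hx : x ∈ s) :
    Tendsto (fun h => (∫ t in x - h..x, f t) / h) (𝓝[>] 0) (𝓝 (f x)) := by
  have hneg : Tendsto Neg.neg (𝓝[>] (0 : ℝ)) (𝓝[<] 0) := by
    simpa using tendsto_neg_nhdsGT_neg (a := (0 : ℝ))
  refine ((integral_hasDerivAt_right .refl (hf.stronglyMeasurableAtFilter hs x hx)
    (hf.continuousAt (hs.mem_nhds hx))).tendsto_slope_zero_left.comp hneg).congr fun h => ?_
  simp [integral_symm x, ← sub_eq_add_neg, div_eq_inv_mul]

end Averages

theorem IntervalIntegrable.mono_of_mem_Icc {f : ℝ → ℝ} {μ : Measure ℝ} {a b x y : ℝ}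
    (hf : IntervalIntegrable f μ a b) (hx : x ∈ Icc a b) (hy : y ∈ Icc a b) :
    IntervalIntegrable f μ x y :=
  hf.mono_set (uIcc_subset_uIcc (Icc_subset_uIcc hx) (Icc_subset_uIcc hy))

section Differences

variable {f : ℝ → ℝ} {a b h : ℝ}

theorem IntervalIntegrable.comp_add_right_of_le (hab : a ≤ b) (hh : 0 ≤ h)
    (hf : IntervalIntegrable f volume a (b + h)) :
    IntervalIntegrable (fun t => f (t + h)) volume a b :=
  (IntervalIntegrable.comp_add_right_iff (c := h)).mpr
    (hf.mono_of_mem_Icc ⟨by linarith, by linarith⟩ ⟨by linarith, le_rfl⟩)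

theorem IntervalIntegrable.sub_comp_add_right (hab : a ≤ b) (hh : 0 ≤ h)
    (hf : IntervalIntegrable f volume a (b + h)) :
    IntervalIntegrable (fun t => f (t + h) - f t) volume a b :=
  (hf.comp_add_right_of_le hab hh).sub
    (hf.mono_of_mem_Icc ⟨le_rfl, by linarith⟩ ⟨hab, by linarith⟩)

theorem integral_sub_comp_add_right (hab : a ≤ b) (hh : 0 ≤ h)
    (hf : IntervalIntegrable f volume a (b + h)) :
    ∫ t in a..b, (f (t + h) - f t) = (∫ t in b..b + h, f t) - ∫ t in a..a + h, f t := by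
  have ha : a ∈ Icc a (b + h) := ⟨le_rfl, by linarith⟩
  have hah : a + h ∈ Icc a (b + h) := ⟨by linarith, by linarith⟩
  have hb : b ∈ Icc a (b + h) := ⟨hab, by linarith⟩
  have hbh : b + h ∈ Icc a (b + h) := ⟨by linarith, le_rfl⟩
  rw [integral_sub (hf.comp_add_right_of_le hab hh) (hf.mono_of_mem_Icc ha hb),
    integral_comp_add_right, integral_interval_sub_interval_comm' (hf.mono_of_mem_Icc hah hbh)
      (hf.mono_of_mem_Icc ha hb) (hf.mono_of_mem_Icc hah ha)]

theorem IntervalIntegrable.sub_comp_sub_right (hab : a ≤ b) (hh : 0 ≤ h)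
    (hf : IntervalIntegrable f volume (a - h) b) :
    IntervalIntegrable (fun t => f t - f (t - h)) volume a b := by
  have := (IntervalIntegrable.sub_comp_add_right (f := f) (by linarith : a - h ≤ b - h) hh
    (by rwa [sub_add_cancel])).comp_sub_right h
  simpa using this

theorem integral_sub_comp_sub_right (hab : a ≤ b) (hh : 0 ≤ h)
    (hf : IntervalIntegrable f volume (a - h) b) :
    ∫ t in a..b, (f t - f (t - h)) = (∫ t in b - h..b, f t) - ∫ t in a - h..a, f t := by
  have := integral_sub_comp_add_right (f := f) (by linarith : a - h ≤ b - h) hh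
    (by rwa [sub_add_cancel])
  rw [sub_add_cancel, sub_add_cancel] at this
  rw [← this, ← integral_comp_sub_right (fun t => f (t + h) - f t)]
  simp

end Differences

section Quotients

variable {f : ℝ → ℝ} {a b c d : ℝ}

theorem eventually_intervalIntegrable_sub_add (hca : c < a) (hab : a ≤ b) (hbd : b < d)
    (hf : ContinuousOn f (Ioo c d)) :
    ∀ᶠ h in 𝓝[>] (0 : ℝ), IntervalIntegrable f volume (a - h) (b + h) := by
  filter_upwards [Ioo_mem_nhdsGT (sub_pos.2 hca), Ioo_mem_nhdsGT (sub_pos.2 hbd)]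
    with h ⟨hh, hac⟩ ⟨_, hbd'⟩
  refine (hf.mono ?_).intervalIntegrable
  rw [uIcc_of_le (by linarith)]
  exact Icc_subset_Ioo (by linarith) (by linarith)

theorem tendsto_integral_forward_quotient (hca : c < a) (hab : a ≤ b) (hbd : b < d)
    (hf : ContinuousOn f (Ioo c d)) :
    Tendsto (fun h => ∫ t in a..b, (f (t + h) - f t) / h) (𝓝[>] 0) (𝓝 (f b - f a)) := by
  have ha : a ∈ Ioo c d := ⟨hca, hab.trans_lt hbd⟩
  have hb : b ∈ Ioo c d := ⟨hca.trans_le hab, hbd⟩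
  have hlim := (tendsto_integral_add_div_nhdsGT_zero hf isOpen_Ioo hb).sub
    (tendsto_integral_add_div_nhdsGT_zero hf isOpen_Ioo ha)
  refine hlim.congr' ?_
  filter_upwards [eventually_intervalIntegrable_sub_add hca hab hbd hf, self_mem_nhdsWithin]
    with h hint (hh : 0 < h)
  rw [intervalIntegral.integral_div, integral_sub_comp_add_right hab hh.le
    (hint.mono_of_mem_Icc ⟨by linarith, by linarith⟩ ⟨by linarith, le_rfl⟩), sub_div]

theorem tendsto_integral_backward_quotient (hca : c < a) (hab : a ≤ b) (hbd : b < d)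
    (hf : ContinuousOn f (Ioo c d)) :
    Tendsto (fun h => ∫ t in a..b, (f t - f (t - h)) / h) (𝓝[>] 0) (𝓝 (f b - f a)) := by
  have ha : a ∈ Ioo c d := ⟨hca, hab.trans_lt hbd⟩
  have hb : b ∈ Ioo c d := ⟨hca.trans_le hab, hbd⟩
  have hlim := (tendsto_integral_sub_div_nhdsGT_zero hf isOpen_Ioo hb).sub
    (tendsto_integral_sub_div_nhdsGT_zero hf isOpen_Ioo ha)
  refine hlim.congr' ?_
  filter_upwards [eventually_intervalIntegrable_sub_add hca hab hbd hf, self_mem_nhdsWithin]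
    with h hint (hh : 0 < h)
  rw [intervalIntegral.integral_div, integral_sub_comp_sub_right hab hh.le
    (hint.mono_of_mem_Icc ⟨le_rfl, by linarith⟩ ⟨by linarith, by linarith⟩), sub_div]

end Quotients

theorem scaleDerivH_eq (f : ℝ → ℝ) (h t : ℝ) :
    scaleDerivH f h t = (1 + I) / 2 * ((f (t + h) - f t) / h : ℝ)
      + (1 - I) / 2 * ((f t - f (t - h)) / h : ℝ) := by
  rw [scaleDerivH]; ring

theorem integral_scaleDerivH {f : ℝ → ℝ} {a b h : ℝ}
    (hfwd : IntervalIntegrable (fun t => (f (t + h) - f t) / h) volume a b)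
    (hbwd : IntervalIntegrable (fun t => (f t - f (t - h)) / h) volume a b) :
    ∫ t in a..b, scaleDerivH f h t = (1 + I) / 2 * ((∫ t in a..b, (f (t + h) - f t) / h : ℝ) : ℂ)
      + (1 - I) / 2 * ((∫ t in a..b, (f t - f (t - h)) / h : ℝ) : ℂ) := by
  simp_rw [scaleDerivH_eq]
  rw [integral_add (.const_mul ⟨hfwd.1.ofReal, hfwd.2.ofReal⟩ _)
      (.const_mul ⟨hbwd.1.ofReal, hbwd.2.ofReal⟩ _),
    intervalIntegral.integral_const_mul, intervalIntegral.integral_const_mul,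
    intervalIntegral.integral_ofReal, intervalIntegral.integral_ofReal]

theorem scale_barrow (a b c d : ℝ) (hca : c < a) (hab : a ≤ b) (hbd : b < d)
    (f : ℝ → ℝ) (hf : ContDiffOn ℝ 1 f (Set.Ioo c d)) :
    Filter.Tendsto (fun h : ℝ => ∫ t in a..b, scaleDerivH f h t)
      (nhdsWithin 0 (Set.Ioi 0)) (nhds ((f b - f a : ℝ) : ℂ)) := by
  have hcont := hf.continuousOn
  have hlim := ((continuous_ofReal.tendsto _).comp
      (tendsto_integral_forward_quotient hca hab hbd hcont)).const_mul ((1 + I) / 2) |>.add <|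
    ((continuous_ofReal.tendsto _).comp
      (tendsto_integral_backward_quotient hca hab hbd hcont)).const_mul ((1 - I) / 2)
  rw [← add_mul, show (1 + I) / 2 + (1 - I) / 2 = 1 by ring, one_mul] at hlim
  refine hlim.congr' ?_
  filter_upwards [eventually_intervalIntegrable_sub_add hca hab hbd hcont, self_mem_nhdsWithin]
    with h hint (hh : 0 < h)
  have hfwd := IntervalIntegrable.sub_comp_add_right hab hh.le
    (hint.mono_of_mem_Icc ⟨by linarith, by linarith⟩ ⟨by linarith, le_rfl⟩)
  have hbwd := IntervalIntegrable.sub_comp_sub_right hab hh.le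
    (hint.mono_of_mem_Icc ⟨le_rfl, by linarith⟩ ⟨by linarith, by linarith⟩)
  exact (integral_scaleDerivH (hfwd.div_const h) (hbwd.div_const h)).symm
end

section
/- Fixed-endpoint, free-time transversality (classical version of Theorem 3.7): Let L be C¹ and suppose (ỹ, T̃), with ỹ ∈ C¹, ỹ(a) = y_a, ỹ(T̃) = y_T, T̃ ∈ (a,b), extremizes I[y,T] = ∫_a^T L(t,y(t),y'(t)) dt over the class of C¹ curves with y(a)=y_a, y(T)=y_T and variable T (in the sense that the first variation vanishes for all admissible variation pairs). Assume t ↦ ∂L/∂v(t,ỹ(t),ỹ'(t)) is C¹. Then the Euler–Lagrange equation holds on [a,T̃] and L(T̃, ỹ(T̃), ỹ'(T̃)) = ∂L/∂v(T̃, ỹ(T̃), ỹ'(T̃))·ỹ'(T̃). -/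
open Set MeasureTheory

/-! With `δ = 0` and `η T = 0` the boundary terms drop out, so the Euler–Lagrange expression is
orthogonal to all `C¹` functions vanishing at both ends; it is continuous, hence zero on `[a, T]`.
The integral term then vanishes for every variation, and the admissible pair
`η t = (t - a) * y'(T)`, `δ = -(T - a)` leaves `(T - a) * (∂L/∂v * y'(T) - L) = 0` at `T`. -/

theorem eqOn_zero_of_forall_integral_mul_eq_zero {E : ℝ → ℝ} {a b : ℝ} (hab : a < b)
    (hE : ContinuousOn E (Icc a b))
    (h : ∀ η : ℝ → ℝ, ContDiff ℝ 1 η → η a = 0 → η b = 0 →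
      ∫ t in a..b, E t * η t = 0) :
    EqOn E 0 (Icc a b) := by
  have hae : ∀ᵐ t, t ∈ Ioo a b → E t = 0 :=
    isOpen_Ioo.ae_eq_zero_of_integral_contDiff_smul_eq_zero
      ((hE.mono Ioo_subset_Icc_self).locallyIntegrableOn measurableSet_Ioo)
      fun g hg _ hgU => by
        have hg0 : ∀ t ∉ Ioo a b, g t = 0 := fun t ht =>
          image_eq_zero_of_notMem_tsupport fun h => ht (hgU h)
        rw [← setIntegral_eq_integral_of_forall_compl_eq_zero (s := Ioc a b)
          fun t ht => by rw [hg0 t fun h => ht (Ioo_subset_Ioc_self h), zero_smul],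
          ← intervalIntegral.integral_of_le hab.le]
        simpa only [smul_eq_mul, mul_comm] using
          h g (hg.of_le (by exact_mod_cast le_top)) (hg0 a (by simp)) (hg0 b (by simp))
  have hIoo : EqOn E 0 (Ioo a b) :=
    Measure.eqOn_open_of_ae_eq ((ae_restrict_iff' measurableSet_Ioo).2 hae) isOpen_Ioo
      (hE.mono Ioo_subset_Icc_self) continuousOn_const
  exact hIoo.of_subset_closure hE continuousOn_const Ioo_subset_Icc_self (closure_Ioo hab.ne).ge

theorem continuous_partialDeriv_middle {L : ℝ → ℝ → ℝ → ℝ}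
    (hL : ContDiff ℝ 1 (fun p : ℝ × ℝ × ℝ => L p.1 p.2.1 p.2.2)) :
    Continuous fun p : ℝ × ℝ × ℝ => deriv (fun z => L p.1 z p.2.2) p.2.1 := by
  set F : ℝ × ℝ × ℝ → ℝ := fun p => L p.1 p.2.1 p.2.2
  have hderiv : ∀ p : ℝ × ℝ × ℝ,
      deriv (fun z => L p.1 z p.2.2) p.2.1 = fderiv ℝ F p (0, 1, 0) := by
    rintro ⟨t, z, v⟩
    have hline : HasDerivAt (fun z' : ℝ => ((t, z', v) : ℝ × ℝ × ℝ)) (0, 1, 0) z :=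
      (hasDerivAt_const z t).prodMk ((hasDerivAt_id z).prodMk (hasDerivAt_const z v))
    exact (((hL.differentiable one_ne_zero) (t, z, v)).hasFDerivAt.comp_hasDerivAt z hline).deriv
  simp only [hderiv]
  exact (hL.continuous_fderiv one_ne_zero).clm_apply continuous_const

theorem fixed_endpoint_free_time_transversality_general
    (a b : ℝ)
    (L : ℝ → ℝ → ℝ → ℝ)
    (hL : ContDiff ℝ 1 (fun p : ℝ × ℝ × ℝ => L p.1 p.2.1 p.2.2))
    (y : ℝ → ℝ) (hy : ContDiff ℝ 1 y)
    (T : ℝ) (hT : T ∈ Set.Ioo a b)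
    (Ly : ℝ → ℝ → ℝ → ℝ) (hLy : ∀ t z v, Ly t z v = deriv (fun z' => L t z' v) z)
    (Lv : ℝ → ℝ → ℝ → ℝ)
    (hLvC1 : ContDiff ℝ 1 (fun t => Lv t (y t) (deriv y t)))
    (hext : ∀ η : ℝ → ℝ, ContDiff ℝ 1 η → η a = 0 → ∀ δ : ℝ,
      η T + deriv y T * δ = 0 →
      (∫ t in a..T,
          (Ly t (y t) (deriv y t) -
            deriv (fun s => Lv s (y s) (deriv y s)) t) * η t) +
        Lv T (y T) (deriv y T) * η T + L T (y T) (deriv y T) * δ = 0) :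
    (∀ t ∈ Set.Icc a T,
        Ly t (y t) (deriv y t) = deriv (fun s => Lv s (y s) (deriv y s)) t) ∧
      L T (y T) (deriv y T) = Lv T (y T) (deriv y T) * deriv y T := by
  have haT : a < T := hT.1
  set E : ℝ → ℝ := fun t => Ly t (y t) (deriv y t) - deriv (fun s => Lv s (y s) (deriv y s)) t
  have hE : Continuous E := by
    simp only [E, hLy]
    exact ((continuous_partialDeriv_middle hL).comp (continuous_id.prodMk
      (hy.continuous.prodMk (hy.continuous_deriv le_rfl)))).sub (hLvC1.continuous_deriv le_rfl)
  have hEL : EqOn E 0 (Icc a T) :=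
    eqOn_zero_of_forall_integral_mul_eq_zero haT hE.continuousOn fun η hη hηa hηT => by
      simpa [hηT] using hext η hη hηa 0 (by simp [hηT])
  have hintegral : ∀ η : ℝ → ℝ, ∫ t in a..T, E t * η t = 0 := fun η => by
    rw [intervalIntegral.integral_congr (g := 0) fun t ht => by
      simp [hEL (uIcc_of_le haT.le ▸ ht)]]
    simp
  refine ⟨fun t ht => sub_eq_zero.1 (hEL ht), ?_⟩
  have hshift := hext (fun t => (t - a) * deriv y T)
    ((contDiff_id.sub contDiff_const).mul contDiff_const) (by simp) (-(T - a)) (by ring)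
  rw [hintegral, zero_add] at hshift
  have hTa : T - a ≠ 0 := sub_ne_zero.2 haT.ne'
  exact mul_left_cancel₀ hTa (by linear_combination -hshift)

theorem fixed_endpoint_free_time_transversality
    (a b ya yT : ℝ) (hab : a < b)
    (L : ℝ → ℝ → ℝ → ℝ)
    (hL : ContDiff ℝ 1 (fun p : ℝ × ℝ × ℝ => L p.1 p.2.1 p.2.2))
    (y : ℝ → ℝ) (hy : ContDiff ℝ 1 y) (hya : y a = ya)
    (T : ℝ) (hT : T ∈ Set.Ioo a b) (hyT : y T = yT)
    (Ly : ℝ → ℝ → ℝ → ℝ) (hLy : ∀ t z v, Ly t z v = deriv (fun z' => L t z' v) z)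
    (Lv : ℝ → ℝ → ℝ → ℝ) (hLv : ∀ t z v, Lv t z v = deriv (fun v' => L t z v') v)
    (hLvC1 : ContDiff ℝ 1 (fun t => Lv t (y t) (deriv y t)))
    (hext : ∀ η : ℝ → ℝ, ContDiff ℝ 1 η → η a = 0 → ∀ δ : ℝ,
      η T + deriv y T * δ = 0 →
      (∫ t in a..T,
          (Ly t (y t) (deriv y t) -
            deriv (fun s => Lv s (y s) (deriv y s)) t) * η t) +
        Lv T (y T) (deriv y T) * η T + L T (y T) (deriv y T) * δ = 0) :
    (∀ t ∈ Set.Icc a T,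
        Ly t (y t) (deriv y t) = deriv (fun s => Lv s (y s) (deriv y s)) t) ∧
      L T (y T) (deriv y T) = Lv T (y T) (deriv y T) * deriv y T :=
  fixed_endpoint_free_time_transversality_general a b L hL y hy T hT Ly hLy Lv hLvC1 hext
end
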